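/- arXiv:1704.02111 — 4 statements merged into one kernel-verified Lean document; each statement's English description precedes it below -/
import Mathlib

section
/- Let K be a field of characteristic zero, S = K[X_0,...,X_n], and I an ideal of S generated by homogeneous polynomials F_1,...,F_r of positive degree. Then the (n+1)-st exterior power of the Kähler differential module of (S/I)/K is isomorphic as an S/I-module to (S/J)(-n-1), where J is the ideal generated by all partial derivatives ∂F_j/∂X_i for 0 ≤ i ≤ n and 1 ≤ j ≤ r. -/
/-!
Taking the variables `X_i` as generators and the `F_j` as relations presents `Ω[(S/I)⁄K]` as
the quotient of the free module `(S/I)^{n+1}` by the rows `(∂F_j/∂X_i)_i` of the Jacobian.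
For any module `M` presented by `m` generators, `⋀^m M` is the base ring modulo the ideal of
all coordinates of the relations: the determinant of lifted coordinate vectors descends to that
quotient, because expanding it along a row lying in the relation module lands in the ideal; and
`1` maps back to the wedge of the generators. Here that ideal is the image of `J` in `S/I`, and
`(S/I) ⧸ J(S/I) ≃ S/J`.
-/

open Function

theorem MultilinearMap.map_eq_map_of_sub_mem {R N Q ι : Type*} [Semiring R] [AddCommGroup N]
    [Module R N] [AddCommGroup Q] [Module R Q] [Fintype ι]
    (f : MultilinearMap R (fun _ : ι => N) Q) {p : Submodule R N}
    (hf : ∀ c : ι → N, (∃ i, c i ∈ p) → f c = 0) {c c' : ι → N}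
    (h : ∀ i, c i - c' i ∈ p) : f c = f c' := by
  classical
  have hterm : ∀ s : Finset ι, s ≠ ∅ → f (s.piecewise (c - c') c') = 0 := by
    intro s hs
    obtain ⟨i, hi⟩ := Finset.nonempty_iff_ne_empty.mpr hs
    exact hf _ ⟨i, by simpa [Finset.piecewise_eq_of_mem _ _ _ hi] using h i⟩
  calc f c = f ((c - c') + c') := by rw [sub_add_cancel]
    _ = f c' := by
      rw [map_add_univ, Finset.sum_eq_single ∅ (fun s _ hs => hterm s hs) (by simp),
        Finset.piecewise_empty]

theorem MultilinearMap.map_update_mem_span_repr {R F ι κ : Type*} [CommSemiring R]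
    [AddCommMonoid F] [Module R F] [DecidableEq ι] (f : MultilinearMap R (fun _ : ι => F) R)
    (b : Module.Basis κ R F) (c : ι → F) (i : ι) (x : F) :
    f (update c i x) ∈ Ideal.span (Set.range (b.repr x)) := by
  have hexpand :
      f (update c i x) = ∑ l ∈ (b.repr x).support, b.repr x l * f (update c i (b l)) := by
    conv_lhs => rw [← f.toLinearMap_apply c i, ← b.linearCombination_repr x]
    simp [Finsupp.linearCombination_apply, Finsupp.sum]
  rw [hexpand]
  exact Ideal.sum_mem _ fun l _ => Ideal.mul_mem_right _ _ (Ideal.subset_span ⟨l, rfl⟩)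

namespace AlternatingMap

section Descend

variable {R N M Q ι : Type*} [Ring R] [AddCommGroup N] [Module R N] [AddCommGroup M]
  [Module R M] [AddCommGroup Q] [Module R Q] [Fintype ι]
  (g : N [⋀^ι]→ₗ[R] Q) {π : N →ₗ[R] M} (hπ : Surjective π)
  (hg : ∀ c : ι → N, (∃ i, c i ∈ LinearMap.ker π) → g c = 0)

include hg in
theorem map_eq_map_of_comp_eq {c c' : ι → N} (h : ∀ i, π (c i) = π (c' i)) : g c = g c' :=
  g.toMultilinearMap.map_eq_map_of_sub_mem hg fun i => LinearMap.sub_mem_ker_iff.mpr (h i)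

include hg in
theorem map_update_eq_map_update [DecidableEq ι] (c : ι → N) (i : ι) {y y' : N}
    (h : π y = π y') : g (update c i y) = g (update c i y') :=
  map_eq_map_of_comp_eq g hg fun l => by rcases eq_or_ne l i with rfl | hl <;> simp [*]

noncomputable def descend : M [⋀^ι]→ₗ[R] Q where
  toFun x := g (surjInv hπ ∘ x)
  map_update_add' x i a b := by
    rw [comp_update, comp_update, comp_update, map_update_eq_map_update g hg _ i
      (y' := surjInv hπ a + surjInv hπ b) (by simp [surjInv_eq hπ]), g.map_update_add]
  map_update_smul' x i r a := by
    rw [comp_update, comp_update, map_update_eq_map_update g hg _ i (y' := r • surjInv hπ a)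
      (by simp [surjInv_eq hπ]), g.map_update_smul]
  map_eq_zero_of_eq' x i j hij hne := g.map_eq_zero_of_eq _ (by simp [hij]) hne

theorem descend_apply (c : ι → N) : descend g hπ hg (π ∘ c) = g c :=
  map_eq_map_of_comp_eq g hg fun _ => surjInv_eq hπ _

end Descend

theorem apply_eq_basis_det_smul {R M N ι : Type*} [CommRing R] [AddCommGroup M] [Module R M]
    [AddCommGroup N] [Module R N] [Fintype ι] [DecidableEq ι] (f : M [⋀^ι]→ₗ[R] N)
    (e : Module.Basis ι R M) (v : ι → M) : f v = e.det v • f e := by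
  suffices f = (LinearMap.toSpanSingleton R N (f e)).compAlternatingMap e.det by
    conv_lhs => rw [this]
    rfl
  refine e.ext_alternating fun σ hσ => ?_
  let τ : Equiv.Perm ι := Equiv.ofBijective σ hσ.bijective_of_finite
  change f (e ∘ τ) = LinearMap.toSpanSingleton R N (f e) (e.det (e ∘ τ))
  rw [f.map_perm, e.det.map_perm, e.det_self, LinearMap.toSpanSingleton_apply, smul_assoc,
    one_smul]

end AlternatingMap

namespace Module.Basis

theorem det_update_self {R M ι : Type*} [CommRing R] [AddCommGroup M] [Module R M] [Fintype ι]
    [DecidableEq ι] (e : Basis ι R M) (i : ι) (x : M) :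
    e.det (update e i x) = e.repr x i := by
  change e.det.toMultilinearMap.toLinearMap e i x = e.coord i x
  congr 1
  refine e.ext fun l => ?_
  rcases eq_or_ne l i with rfl | hli
  · simp [e.det_self]
  · simp only [MultilinearMap.toLinearMap_apply, AlternatingMap.coe_multilinearMap,
      coord_apply, repr_self, Finsupp.single_eq_of_ne hli.symm]
    exact e.det.map_eq_zero_of_eq _ (i := l) (j := i) (by simp [hli]) hli

open exteriorPower in
theorem nonempty_exteriorPower_equiv_quotient {R F M ι : Type*} [CommRing R]
    [AddCommGroup F] [Module R F] [AddCommGroup M] [Module R M] {m : ℕ}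
    (b : Basis (Fin m) R F) {π : F →ₗ[R] M} (hπ : Surjective π) {v : ι → F}
    (hker : LinearMap.ker π = Submodule.span R (Set.range v)) :
    Nonempty (⋀[R]^m M ≃ₗ[R]
      R ⧸ Ideal.span (Set.range fun p : Fin m × ι => b.repr (v p.2) p.1)) := by
  set J := Ideal.span (Set.range fun p : Fin m × ι => b.repr (v p.2) p.1)
  have hdet : ∀ c : Fin m → F, (∃ i, c i ∈ LinearMap.ker π) → J.mkQ (b.det c) = 0 := by
    rintro c ⟨i, hi⟩
    rw [Submodule.mkQ_apply, Submodule.Quotient.mk_eq_zero, ← update_eq_self i c]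
    rw [hker] at hi
    refine (Submodule.span_le
      (p := Submodule.comap (b.det.toMultilinearMap.toLinearMap c i) J)).mpr ?_ hi
    rintro _ ⟨j, rfl⟩
    exact Ideal.span_mono (by rintro _ ⟨l, rfl⟩; exact ⟨(l, j), rfl⟩)
      (b.det.toMultilinearMap.map_update_mem_span_repr b c i (v j))
  let Λ : ⋀[R]^m M →ₗ[R] R ⧸ J :=
    alternatingMapLinearEquiv ((J.mkQ.compAlternatingMap b.det).descend hπ hdet)
  let g : F [⋀^Fin m]→ₗ[R] ⋀[R]^m M := (ιMulti R m).compLinearMap π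
  have hΛ : ∀ c, Λ (g c) = J.mkQ (b.det c) := fun c =>
    (alternatingMapLinearEquiv_apply_ιMulti _ _).trans (AlternatingMap.descend_apply _ hπ hdet c)
  have hann : J ≤ LinearMap.ker (LinearMap.toSpanSingleton R _ (g b)) := by
    refine Ideal.span_le.mpr ?_
    rintro _ ⟨⟨i, j⟩, rfl⟩
    have hvj : π (v j) = 0 := LinearMap.mem_ker.mp (hker ▸ Submodule.subset_span ⟨j, rfl⟩)
    change b.repr (v j) i • g b = 0
    rw [← b.det_update_self, ← g.apply_eq_basis_det_smul]
    exact (ιMulti R m).map_coord_zero i (by simpa using hvj)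
  let ψ : R ⧸ J →ₗ[R] ⋀[R]^m M := J.liftQ _ hann
  refine ⟨LinearEquiv.ofLinearMap (f := Λ) (g := ψ) ?_ ?_⟩
  · refine Submodule.linearMap_qext _ (LinearMap.ext_ring ?_)
    simp only [LinearMap.comp_apply, LinearMap.id_apply, Submodule.mkQ_apply, ψ,
      Submodule.liftQ_apply, LinearMap.toSpanSingleton_apply, one_smul, hΛ, b.det_self]
  · refine linearMap_ext (AlternatingMap.ext fun x => ?_)
    obtain ⟨c, rfl⟩ := hπ.comp_left x
    change ψ (Λ (g c)) = g c
    rw [hΛ, Submodule.mkQ_apply, Submodule.liftQ_apply, LinearMap.toSpanSingleton_apply,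
      ← g.apply_eq_basis_det_smul]

end Module.Basis

theorem Algebra.Presentation.span_differentials_relation {R S ι σ : Type*} [CommRing R]
    [CommRing S] [Algebra R S] (P : Algebra.Presentation R S ι σ) :
    Ideal.span (Set.range fun p : ι × σ => P.differentials.relation p.2 p.1) =
      (Ideal.span (Set.range fun p : ι × σ => MvPolynomial.pderiv p.1 (P.relation p.2))).map
        (algebraMap P.Ring S) := by
  rw [Ideal.map_span, ← Set.range_comp]
  congr 2
  ext p
  exact congrArg (algebraMap P.Ring S) (KaehlerDifferential.mvPolynomialBasis_repr_apply _ _ _ _)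

noncomputable def DoubleQuot.quotQuotLinearEquivQuotOfLE {S : Type*} [CommRing S]
    {I J : Ideal S} (h : I ≤ J) :
    letI := Module.compHom (S ⧸ J)
      (Ideal.quotientMap J (RingHom.id S) (fun x hx => by simpa using h hx))
    ((S ⧸ I) ⧸ J.map (Ideal.Quotient.mk I)) ≃ₗ[S ⧸ I] S ⧸ J :=
  letI := Module.compHom (S ⧸ J)
    (Ideal.quotientMap J (RingHom.id S) (fun x hx => by simpa using h hx))
  { quotQuotEquivQuotOfLE h with
    map_smul' := by
      intro c x
      obtain ⟨c, rfl⟩ := Ideal.Quotient.mk_surjective c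
      obtain ⟨x, rfl⟩ := Ideal.Quotient.mk_surjective x
      obtain ⟨x, rfl⟩ := Ideal.Quotient.mk_surjective x
      change quotQuotEquivQuotOfLE h (quotQuotMk I J (c * x)) =
        Ideal.Quotient.mk J c * quotQuotEquivQuotOfLE h (quotQuotMk I J x)
      simp only [quotQuotEquivQuotOfLE_quotQuotMk, map_mul] }

/-- Let `K` be a field of characteristic zero, `S = K[X_0, …, X_n]`, and let
`I = ⟨F_1, …, F_r⟩` be an ideal generated by homogeneous polynomials of positive
degree.  Let `J` be the ideal generated by all partial derivatives `∂F_j/∂X_i`.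
Then the `(n+1)`-st exterior power of the Kähler differential module
`Ω^1_{(S/I)/K}` is isomorphic as an `S/I`-module to `(S/J)(-n-1)`; as the twist
only changes the grading, as an `S/I`-module this is `S/J` (the `S/I`-module
structure on `S/J` comes from `I ≤ J`, which follows from Euler's relation and
is recorded as the hypothesis `hIJ`). -/
theorem top_exterior_power_kaehler_iso (K : Type) [Field K] (n r : ℕ)
    (F : Fin r → MvPolynomial (Fin (n + 1)) K)
    (I J : Ideal (MvPolynomial (Fin (n + 1)) K))
    (hI : I = Ideal.span (Set.range F))
    (hJ : J = Ideal.span (Set.range fun p : Fin (n + 1) × Fin r =>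
      MvPolynomial.pderiv p.1 (F p.2)))
    (hIJ : I ≤ J) :
    letI : Module (MvPolynomial (Fin (n + 1)) K ⧸ I) (MvPolynomial (Fin (n + 1)) K ⧸ J) :=
      Module.compHom _ (Ideal.quotientMap J (RingHom.id _)
        (fun x hx => by simpa using hIJ hx))
    Nonempty
      ((⋀[(MvPolynomial (Fin (n + 1)) K ⧸ I)]^(n+1)
          (Ω[(MvPolynomial (Fin (n + 1)) K ⧸ I)⁄K])) ≃ₗ[MvPolynomial (Fin (n + 1)) K ⧸ I]
        (MvPolynomial (Fin (n + 1)) K ⧸ J)) := by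
  subst hI hJ
  let P := Algebra.Presentation.naive (v := F)
  obtain ⟨e⟩ := Finsupp.basisSingleOne.nonempty_exteriorPower_equiv_quotient
    P.differentials.surjective_π P.differentials.ker_π
  exact ⟨e ≪≫ₗ Submodule.quotEquivOfEq _ _ P.span_differentials_relation ≪≫ₗ
    DoubleQuot.quotQuotLinearEquivQuotOfLE hIJ⟩
end

section
/- Let X ⊆ P^1 be the 0-dimensional scheme with vanishing ideal I_X = (F) in S = K[X_0,X_1], where F = Π_{i=1}^s (X_1 - a_i X_0)^{m_i} with distinct a_1,...,a_s ∈ K and m_i ≥ 1, and let μ = Σ m_i. Then for every i ∈ ℤ, the dimension of the degree-i component of Ω^2_{R_X/K} equals binom(i-1,1) - 2·binom(i-μ,1) + binom(i-s-μ+1,1) (where binom(k,1) = max(k,0) interpreted via Hilbert functions of S), i.e., the Hilbert function of Ω^2_{R_X/K} takes the values 0, 0, 1, 2, ..., μ-2, μ-1, μ-2, ..., μ-s, μ-s, ... in degrees 0, 1, 2, .... -/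
open MvPolynomial

set_option maxHeartbeats 1000000
set_option synthInstance.maxHeartbeats 400000

/-- The Hilbert function of `S/J` (`S = K[X_0, X_1]`, `J` a homogeneous ideal)
at degree `i`: the `K`-dimension of the image of the space of homogeneous
polynomials of degree `i` in `S/J`. -/
noncomputable def hilbertFnQuot (K : Type) [Field K]
    (J : Ideal (MvPolynomial (Fin 2) K)) (i : ℕ) : ℕ :=
  Module.finrank K
    ((MvPolynomial.homogeneousSubmodule (Fin 2) K i) ⧸
      (Submodule.comap (MvPolynomial.homogeneousSubmodule (Fin 2) K i).subtype
        (Submodule.restrictScalars K J)))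

/-!
Write `F = ∏ Lᵢ ^ mᵢ` with `Lᵢ = X₁ - aᵢ X₀`. Both partial derivatives of `F` factor as
`∂ₖ F = G · Aₖ`, where `G = ∏ Lᵢ ^ (mᵢ - 1)` has degree `μ - s` and `A₀, A₁` are forms of degree
`s - 1` without common factor: by Euler's identity `X₀ A₀ + X₁ A₁ = μ ∏ Lᵢ` a common prime factor
divides some `Lₖ`, then expanding `A₁ = ∑ mᵢ ∏_{j ≠ i} Lⱼ` it also divides some `Lⱼ` with `j ≠ k`,
hence both `X₀` and `X₁`. In degree `μ - 1 + d` the Jacobian ideal is therefore the image of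
`(p, q) ↦ p ∂₀F + q ∂₁F` on pairs of forms of degree `d`, whose kernel consists of the Koszul
syzygies `(A₁ T, -A₀ T)` with `T` of degree `d - s + 1`. Counting dimensions, the ideal has
dimension `2 (d + 1) - max (d - s + 2) 0` in that degree.
-/

open Module Finset

theorem Derivation.leibniz_finset_prod {ι R A : Type*} [CommSemiring R] [CommSemiring A]
    [Algebra R A] [DecidableEq ι] (D : Derivation R A A) (t : Finset ι) (g : ι → A) :
    D (∏ i ∈ t, g i) = ∑ i ∈ t, (∏ j ∈ t.erase i, g j) * D (g i) := by
  induction t using Finset.induction_on with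
  | empty => simp
  | insert b t hb ih =>
    rw [prod_insert hb, D.leibniz, ih, sum_insert hb, erase_insert hb, smul_eq_mul, smul_eq_mul,
      mul_sum, add_comm]
    congr 1
    refine sum_congr rfl fun i hi => ?_
    rw [erase_insert_of_ne (ne_of_mem_of_not_mem hi hb).symm,
      prod_insert fun h => hb (mem_of_mem_erase h)]
    ring

theorem Derivation.leibniz_prod_pow {ι R A : Type*} [CommSemiring R] [CommSemiring A]
    [Algebra R A] [Fintype ι] [DecidableEq ι] (D : Derivation R A A) (L : ι → A) {m : ι → ℕ}
    (hm : ∀ i, 1 ≤ m i) :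
    D (∏ i, L i ^ m i) =
      (∏ i, L i ^ (m i - 1)) * ∑ i, m i * (∏ j ∈ univ.erase i, L j) * D (L i) := by
  rw [D.leibniz_finset_prod, mul_sum]
  refine sum_congr rfl fun i _ => ?_
  have hpow : ∀ j, L j ^ m j = L j ^ (m j - 1) * L j := fun j => by
    rw [← pow_succ, Nat.sub_add_cancel (hm j)]
  rw [D.leibniz_pow, smul_eq_mul, nsmul_eq_mul,
    ← mul_prod_erase univ (fun j => L j ^ (m j - 1)) (mem_univ i)]
  simp_rw [hpow, prod_mul_distrib]
  ring

section Syzygy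

variable {R : Type*} [CommRing R] {A B p q T : R}

lemma dvd_of_mul_add_mul_eq_zero [DecompositionMonoid R] (hAB : IsRelPrime B A)
    (h : p * A + q * B = 0) : B ∣ p :=
  hAB.dvd_of_dvd_mul_right ⟨-q, by linear_combination h⟩

lemma eq_neg_mul_of_mul_add_mul_eq_zero [IsDomain R] (hB : B ≠ 0) (h : p * A + q * B = 0)
    (hp : p = B * T) : q = -(A * T) :=
  mul_right_cancel₀ hB (by rw [hp] at h; linear_combination h)

end Syzygy

namespace MvPolynomial

theorem eq_of_prime_dvd_X_of_dvd_X {σ R : Type*} [CommRing R] [IsDomain R]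
    {q : MvPolynomial σ R} (hq : Prime q) {i j : σ} (hi : q ∣ X i) (hj : q ∣ X j) : i = j :=
  X_dvd_X.mp ((hq.associated_of_dvd X_prime hi).dvd_iff_dvd_left.mp hj)

section HomogeneousComponent

variable {σ R : Type*} [CommSemiring R]

attribute [local instance] MvPolynomial.gradedAlgebra in
theorem coe_decompose_eq_homogeneousComponent (φ : MvPolynomial σ R) (i : ℕ) :
    (DirectSum.decompose (homogeneousSubmodule σ R) φ i : MvPolynomial σ R) =
      homogeneousComponent i φ :=
  decomposition.decompose'_apply φ i

attribute [local instance] MvPolynomial.gradedAlgebra in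
theorem IsHomogeneous.homogeneousComponent_mul_add {f : MvPolynomial σ R} {n : ℕ}
    (hf : f.IsHomogeneous n) (p : MvPolynomial σ R) (k : ℕ) :
    homogeneousComponent (n + k) (f * p) = f * homogeneousComponent k p := by
  have := DirectSum.coe_decompose_mul_of_left_mem_of_le (homogeneousSubmodule σ R) (b := p)
    (n := n + k) hf (Nat.le_add_right n k)
  rwa [Nat.add_sub_cancel_left, coe_decompose_eq_homogeneousComponent,
    coe_decompose_eq_homogeneousComponent] at this

attribute [local instance] MvPolynomial.gradedAlgebra in
theorem IsHomogeneous.homogeneousComponent_mul_of_lt {f : MvPolynomial σ R} {n : ℕ}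
    (hf : f.IsHomogeneous n) (p : MvPolynomial σ R) {k : ℕ} (hk : k < n) :
    homogeneousComponent k (f * p) = 0 := by
  have := DirectSum.coe_decompose_mul_of_left_mem_of_not_le (homogeneousSubmodule σ R) (b := p)
    hf (not_le.mpr hk)
  rwa [coe_decompose_eq_homogeneousComponent] at this

end HomogeneousComponent

variable {σ K : Type*} [Field K]

instance [Finite σ] (n : ℕ) : Module.Finite K (homogeneousSubmodule σ K n) :=
  Module.Finite.iff_fg.mpr (homogeneousSubmodule_fg σ K n)

theorem finrank_homogeneousSubmodule [Fintype σ] (n : ℕ) :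
    finrank K (homogeneousSubmodule σ K n) = (Fintype.card σ + n - 1).choose n := by
  classical
  have hdeg :
      {d : σ →₀ ℕ | d.degree = n} = ((univ : Finset σ).finsuppAntidiag n : Set (σ →₀ ℕ)) := by
    ext d
    simp [Finsupp.degree_eq_sum, mem_finsuppAntidiag]
  rw [homogeneousSubmodule_eq_finsupp_supported, ← restrictSupport,
    finrank_eq_nat_card_basis (basisRestrictSupport K _), hdeg, Nat.card_coe_set_eq,
    Set.ncard_coe_finset, card_finsuppAntidiag_nat_eq_choose, card_univ]

noncomputable def mulPairMap (f g : MvPolynomial σ K) (d : ℕ) :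
    homogeneousSubmodule σ K d × homogeneousSubmodule σ K d →ₗ[K] MvPolynomial σ K :=
  (LinearMap.mulRight K f ∘ₗ (homogeneousSubmodule σ K d).subtype).coprod
    (LinearMap.mulRight K g ∘ₗ (homogeneousSubmodule σ K d).subtype)

@[simp]
lemma mulPairMap_apply (f g : MvPolynomial σ K) (d : ℕ)
    (pq : homogeneousSubmodule σ K d × homogeneousSubmodule σ K d) :
    mulPairMap f g d pq = pq.1 * f + pq.2 * g := rfl

section SpanPair

variable {f g : MvPolynomial σ K} {N : ℕ}

lemma homogeneousSubmodule_inf_span_pair_eq_bot (hf : f.IsHomogeneous N)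
    (hg : g.IsHomogeneous N) {n : ℕ} (hn : n < N) :
    homogeneousSubmodule σ K n ⊓ (Ideal.span {f, g}).restrictScalars K = ⊥ := by
  refine (Submodule.eq_bot_iff _).mpr fun x ⟨hx, hxJ⟩ => ?_
  obtain ⟨p, q, rfl⟩ := Ideal.mem_span_pair.mp hxJ
  rw [← homogeneousComponent_eq_self hx, map_add, mul_comm p, mul_comm q,
    hf.homogeneousComponent_mul_of_lt p hn, hg.homogeneousComponent_mul_of_lt q hn, add_zero]

lemma range_mulPairMap (hf : f.IsHomogeneous N) (hg : g.IsHomogeneous N) (d : ℕ) :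
    LinearMap.range (mulPairMap f g d) =
      homogeneousSubmodule σ K (N + d) ⊓ (Ideal.span {f, g}).restrictScalars K := by
  ext x
  constructor
  · rintro ⟨⟨p, q⟩, rfl⟩
    refine ⟨?_, Ideal.mem_span_pair.mpr ⟨p, q, rfl⟩⟩
    rw [SetLike.mem_coe, mem_homogeneousSubmodule, add_comm N d]
    exact (p.2.mul hf).add (q.2.mul hg)
  · rintro ⟨hx, hxJ⟩
    obtain ⟨p, q, rfl⟩ := Ideal.mem_span_pair.mp hxJ
    refine ⟨(⟨_, homogeneousComponent_mem d p⟩, ⟨_, homogeneousComponent_mem d q⟩), ?_⟩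
    rw [mulPairMap_apply, ← homogeneousComponent_eq_self hx, map_add, mul_comm p, mul_comm q,
      hf.homogeneousComponent_mul_add, hg.homogeneousComponent_mul_add]
    ring

end SpanPair

lemma ker_mulPairMap_mul_left {G : MvPolynomial σ K} (hG : G ≠ 0) (A B : MvPolynomial σ K)
    (d : ℕ) :
    LinearMap.ker (mulPairMap (G * A) (G * B) d) = LinearMap.ker (mulPairMap A B d) := by
  ext pq
  have : (pq.1 : MvPolynomial σ K) * (G * A) + pq.2 * (G * B) = G * (pq.1 * A + pq.2 * B) := by
    ring
  simp [this, hG]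

section Koszul

variable {A B : MvPolynomial σ K} {e : ℕ}

lemma ker_mulPairMap_eq_bot (hB : B.IsHomogeneous e) (hB0 : B ≠ 0) (hAB : IsRelPrime B A)
    {d : ℕ} (hd : d < e) : LinearMap.ker (mulPairMap A B d) = ⊥ := by
  refine (Submodule.eq_bot_iff _).mpr fun ⟨⟨p, hp⟩, ⟨q, hq⟩⟩ hpq => ?_
  have hpq : p * A + q * B = 0 := hpq
  obtain ⟨T, rfl⟩ := dvd_of_mul_add_mul_eq_zero hAB hpq
  have hBT : B * T = B * 0 := by
    rw [mul_zero, ← homogeneousComponent_eq_self hp, hB.homogeneousComponent_mul_of_lt T hd]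
  have hq0 := eq_neg_mul_of_mul_add_mul_eq_zero hB0 hpq hBT
  ext <;> simp [hBT, hq0]

noncomputable def koszulMap (hA : A.IsHomogeneous e) (hB : B.IsHomogeneous e) (t : ℕ) :
    homogeneousSubmodule σ K t →ₗ[K]
      homogeneousSubmodule σ K (e + t) × homogeneousSubmodule σ K (e + t) :=
  ((LinearMap.mulLeft K B).restrict fun _ hT => hB.mul hT).prod
    (-(LinearMap.mulLeft K A).restrict fun _ hT => hA.mul hT)

lemma koszulMap_injective (hA : A.IsHomogeneous e) (hB : B.IsHomogeneous e) (hB0 : B ≠ 0)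
    (t : ℕ) : Function.Injective (koszulMap hA hB t) := by
  rw [← LinearMap.ker_eq_bot, Submodule.eq_bot_iff]
  intro T hT
  have hBT : B * T = 0 := congrArg (fun x => (x.1 : MvPolynomial σ K)) hT
  exact Subtype.ext ((mul_eq_zero.mp hBT).resolve_left hB0)

lemma ker_mulPairMap_eq_range_koszulMap (hA : A.IsHomogeneous e) (hB : B.IsHomogeneous e)
    (hB0 : B ≠ 0) (hAB : IsRelPrime B A) (t : ℕ) :
    LinearMap.ker (mulPairMap A B (e + t)) = LinearMap.range (koszulMap hA hB t) := by
  ext ⟨⟨p, hp⟩, ⟨q, hq⟩⟩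
  constructor
  · intro hpq
    have hpq : p * A + q * B = 0 := hpq
    obtain ⟨T, rfl⟩ := dvd_of_mul_add_mul_eq_zero hAB hpq
    have hBT : B * T = B * homogeneousComponent t T := by
      rw [← hB.homogeneousComponent_mul_add, homogeneousComponent_eq_self hp]
    refine ⟨⟨_, homogeneousComponent_mem t T⟩, Prod.ext (Subtype.ext hBT.symm) (Subtype.ext ?_)⟩
    exact (eq_neg_mul_of_mul_add_mul_eq_zero hB0 hpq hBT).symm
  · rintro ⟨T, hT⟩
    rw [← hT]
    show B * T * A + -(A * T) * B = 0
    ring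

lemma finrank_ker_mulPairMap_add (hA : A.IsHomogeneous e) (hB : B.IsHomogeneous e)
    (hB0 : B ≠ 0) (hAB : IsRelPrime B A) (t : ℕ) :
    finrank K (LinearMap.ker (mulPairMap A B (e + t))) =
      finrank K (homogeneousSubmodule σ K t) := by
  rw [ker_mulPairMap_eq_range_koszulMap hA hB hB0 hAB,
    LinearMap.finrank_range_of_inj (koszulMap_injective hA hB hB0 t)]

end Koszul

end MvPolynomial

section TwoVariables

variable {K : Type} [Field K]

lemma MvPolynomial.finrank_homogeneousSubmodule_fin_two (n : ℕ) :
    finrank K (homogeneousSubmodule (Fin 2) K n) = n + 1 := by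
  simp [finrank_homogeneousSubmodule, add_comm 1 n]

lemma hilbertFnQuot_add_finrank_inf (J : Ideal (MvPolynomial (Fin 2) K)) (i : ℕ) :
    hilbertFnQuot K J i + finrank K ↥(homogeneousSubmodule (Fin 2) K i ⊓ J.restrictScalars K) =
      i + 1 := by
  rw [hilbertFnQuot, ← Submodule.map_comap_subtype, Submodule.finrank_map_subtype_eq,
    Submodule.finrank_quotient_add_finrank, finrank_homogeneousSubmodule_fin_two]

theorem hilbertFnQuot_span_mul_pair {G A B : MvPolynomial (Fin 2) K} {g e : ℕ}
    (hG : G.IsHomogeneous g) (hG0 : G ≠ 0) (hA : A.IsHomogeneous e) (hB : B.IsHomogeneous e)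
    (hB0 : B ≠ 0) (hAB : IsRelPrime B A) (i : ℕ) :
    (hilbertFnQuot K (Ideal.span {G * A, G * B}) i : ℤ) =
      i + 1 - 2 * max ((i : ℤ) + 1 - (g + e)) 0 + max ((i : ℤ) + 1 - (g + 2 * e)) 0 := by
  have hsum := hilbertFnQuot_add_finrank_inf (Ideal.span {G * A, G * B}) i
  rcases lt_or_ge i (g + e) with hi | hi
  · rw [homogeneousSubmodule_inf_span_pair_eq_bot (hG.mul hA) (hG.mul hB) hi, finrank_bot] at hsum
    omega
  obtain ⟨d, rfl⟩ := Nat.exists_eq_add_of_le hi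
  have hrank := LinearMap.finrank_range_add_finrank_ker (mulPairMap (G * A) (G * B) d)
  rw [range_mulPairMap (hG.mul hA) (hG.mul hB), ker_mulPairMap_mul_left hG0, finrank_prod,
    finrank_homogeneousSubmodule_fin_two] at hrank
  rcases lt_or_ge d e with hd | hd
  · rw [ker_mulPairMap_eq_bot hB hB0 hAB hd, finrank_bot] at hrank
    omega
  · obtain ⟨t, rfl⟩ := Nat.exists_eq_add_of_le hd
    rw [finrank_ker_mulPairMap_add hA hB hB0 hAB, finrank_homogeneousSubmodule_fin_two] at hrank
    omega

end TwoVariables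

section BinaryForm

variable {K ι : Type*} [Field K] (a : ι → K)

noncomputable def linFactor (i : ι) : MvPolynomial (Fin 2) K := X 1 - C (a i) * X 0

lemma isHomogeneous_linFactor (i : ι) : (linFactor a i).IsHomogeneous 1 :=
  (isHomogeneous_X _ _).sub (isHomogeneous_C_mul_X _ _)

lemma eval_linFactor (i : ι) : eval ![0, 1] (linFactor a i) = 1 := by
  simp [linFactor]

variable {a} in
lemma Prime.eq_of_dvd_linFactor {q : MvPolynomial (Fin 2) K} (hq : Prime q)
    (ha : Function.Injective a) {j k : ι} (hqj : q ∣ linFactor a j) (hqk : q ∣ linFactor a k) :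
    j = k := by
  by_contra hjk
  have hX0 : q ∣ X 0 := by
    rw [← ((sub_ne_zero.mpr (ha.ne hjk)).isUnit.map C).dvd_mul_left]
    have : C (a j - a k) * X 0 = linFactor a k - linFactor a j := by
      simp only [linFactor, map_sub]; ring
    rw [this]
    exact dvd_sub hqk hqj
  have hX1 : q ∣ X 1 := by
    have : X 1 = linFactor a k + C (a k) * X 0 := by rw [linFactor]; ring
    rw [this]
    exact dvd_add hqk (dvd_mul_of_dvd_right hX0 _)
  exact absurd (eq_of_prime_dvd_X_of_dvd_X hq hX0 hX1) (by decide)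

variable [Fintype ι] (m : ι → ℕ)

noncomputable def jacobianGcd : MvPolynomial (Fin 2) K := ∏ i, linFactor a i ^ (m i - 1)

lemma isHomogeneous_jacobianGcd : (jacobianGcd a m).IsHomogeneous (∑ i, (m i - 1)) :=
  IsHomogeneous.prod _ _ _ fun i _ => by simpa using (isHomogeneous_linFactor a i).pow (m i - 1)

lemma jacobianGcd_ne_zero : jacobianGcd a m ≠ 0 := by
  intro h
  simpa [jacobianGcd, eval_prod, eval_linFactor] using congrArg (eval ![(0 : K), 1]) h

variable [DecidableEq ι]

noncomputable def prodEraseLinFactor (i : ι) : MvPolynomial (Fin 2) K :=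
  ∏ j ∈ univ.erase i, linFactor a j

noncomputable def jacobianCofactor₀ : MvPolynomial (Fin 2) K :=
  ∑ i, C (-(a i) * m i) * prodEraseLinFactor a i

noncomputable def jacobianCofactor₁ : MvPolynomial (Fin 2) K :=
  ∑ i, C (m i : K) * prodEraseLinFactor a i

lemma isHomogeneous_prodEraseLinFactor (i : ι) :
    (prodEraseLinFactor a i).IsHomogeneous (Fintype.card ι - 1) := by
  simpa [prodEraseLinFactor, card_erase_of_mem] using
    IsHomogeneous.prod (univ.erase i) (linFactor a) (fun _ => 1)
      fun j _ => isHomogeneous_linFactor a j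

lemma isHomogeneous_jacobianCofactor₀ :
    (jacobianCofactor₀ a m).IsHomogeneous (Fintype.card ι - 1) :=
  IsHomogeneous.sum _ _ _ fun i _ => (isHomogeneous_prodEraseLinFactor a i).C_mul _

lemma isHomogeneous_jacobianCofactor₁ :
    (jacobianCofactor₁ a m).IsHomogeneous (Fintype.card ι - 1) :=
  IsHomogeneous.sum _ _ _ fun i _ => (isHomogeneous_prodEraseLinFactor a i).C_mul _

lemma jacobianCofactor₁_ne_zero [CharZero K] (hμ : ∑ i, m i ≠ 0) :
    jacobianCofactor₁ a m ≠ 0 := by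
  intro h
  have := congrArg (eval ![(0 : K), 1]) h
  simp [jacobianCofactor₁, prodEraseLinFactor, eval_linFactor] at this
  exact hμ (by exact_mod_cast this)

lemma pderiv_zero_prod_linFactor_pow (hm : ∀ i, 1 ≤ m i) :
    pderiv 0 (∏ i, linFactor a i ^ m i) = jacobianGcd a m * jacobianCofactor₀ a m := by
  rw [(pderiv 0).leibniz_prod_pow _ hm, jacobianGcd, jacobianCofactor₀]
  congr 1
  refine sum_congr rfl fun i _ => ?_
  simp [linFactor, prodEraseLinFactor]
  ring

lemma pderiv_one_prod_linFactor_pow (hm : ∀ i, 1 ≤ m i) :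
    pderiv 1 (∏ i, linFactor a i ^ m i) = jacobianGcd a m * jacobianCofactor₁ a m := by
  rw [(pderiv 1).leibniz_prod_pow _ hm, jacobianGcd, jacobianCofactor₁]
  congr 1
  refine sum_congr rfl fun i _ => ?_
  simp [linFactor, prodEraseLinFactor]

lemma X_zero_mul_jacobianCofactor₀_add :
    X 0 * jacobianCofactor₀ a m + X 1 * jacobianCofactor₁ a m =
      C (∑ i, m i : K) * ∏ i, linFactor a i := by
  simp_rw [jacobianCofactor₀, jacobianCofactor₁, mul_sum, ← sum_add_distrib, map_sum, sum_mul]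
  refine sum_congr rfl fun i _ => ?_
  rw [← mul_prod_erase univ (linFactor a) (mem_univ i), ← prodEraseLinFactor, linFactor]
  simp only [map_mul, map_neg, map_natCast]
  ring

variable {a m} {q : MvPolynomial (Fin 2) K}

lemma dvd_prod_linFactor (hμ : (∑ i, m i : K) ≠ 0) (hq0 : q ∣ jacobianCofactor₀ a m)
    (hq1 : q ∣ jacobianCofactor₁ a m) : q ∣ ∏ i, linFactor a i := by
  rw [← (hμ.isUnit.map C).dvd_mul_left, ← X_zero_mul_jacobianCofactor₀_add]
  exact dvd_add (dvd_mul_of_dvd_right hq0 _) (dvd_mul_of_dvd_right hq1 _)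

lemma dvd_prodEraseLinFactor {k : ι} (hmk : (m k : K) ≠ 0) (hq1 : q ∣ jacobianCofactor₁ a m)
    (hqk : q ∣ linFactor a k) : q ∣ prodEraseLinFactor a k := by
  rw [← (hmk.isUnit.map C).dvd_mul_left]
  have hrest : q ∣ ∑ i ∈ univ.erase k, C (m i : K) * prodEraseLinFactor a i :=
    dvd_sum fun i hi => dvd_mul_of_dvd_right (hqk.trans (dvd_prod_of_mem _
      (mem_erase.mpr ⟨(ne_of_mem_erase hi).symm, mem_univ k⟩))) _
  have := dvd_sub hq1 hrest
  rwa [jacobianCofactor₁, ← add_sum_erase _ _ (mem_univ k), add_sub_cancel_right] at this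

theorem isRelPrime_jacobianCofactor [CharZero K] (ha : Function.Injective a)
    (hm : ∀ i, 1 ≤ m i) (hμ : ∑ i, m i ≠ 0) :
    IsRelPrime (jacobianCofactor₁ a m) (jacobianCofactor₀ a m) := by
  have hm0 : ∀ i, (m i : K) ≠ 0 := fun i => Nat.cast_ne_zero.mpr (by have := hm i; omega)
  refine (UniqueFactorizationMonoid.isRelPrime_iff_no_prime_factors
    (jacobianCofactor₁_ne_zero a m hμ)).mpr fun q hq1 hq0 hq => ?_
  obtain ⟨k, -, hqk⟩ :=
    hq.exists_mem_finset_dvd (dvd_prod_linFactor (by exact_mod_cast hμ) hq0 hq1)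
  obtain ⟨j, hj, hqj⟩ := hq.exists_mem_finset_dvd (dvd_prodEraseLinFactor (hm0 k) hq1 hqk)
  exact ne_of_mem_erase hj (hq.eq_of_dvd_linFactor ha hqj hqk)

end BinaryForm

/-- `Ω²_{R_X/K} ≅ (S/J)(-2)` for the Jacobian ideal `J = (∂F/∂X₀, ∂F/∂X₁)`, so the claim in
degree `i + 2` of `Ω²` is stated for degree `i` of `S/J`; degrees `0, 1` of `Ω²` vanish. -/
theorem hilbert_function_omega2_P1 (K : Type) [Field K] [CharZero K] (s : ℕ)
    (hs : 1 ≤ s) (a : Fin s → K) (ha : Function.Injective a)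
    (m : Fin s → ℕ) (hm : ∀ i, 1 ≤ m i) (μ : ℕ) (hμ : μ = ∑ i, m i)
    (F : MvPolynomial (Fin 2) K)
    (hF : F = ∏ i : Fin s,
      (MvPolynomial.X 1 - MvPolynomial.C (a i) * MvPolynomial.X 0) ^ (m i)) :
    ∀ i : ℕ,
      (hilbertFnQuot K
          (Ideal.span {MvPolynomial.pderiv 0 F, MvPolynomial.pderiv 1 F}) i : ℤ) =
        ((i : ℤ) + 1) - 2 * max ((i : ℤ) + 2 - (μ : ℤ)) 0 +
          max ((i : ℤ) + 3 - (s : ℤ) - (μ : ℤ)) 0 := by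
  intro i
  have hdeg : ∑ j, (m j - 1) + s = μ := by
    calc ∑ j, (m j - 1) + s = ∑ j, (m j - 1 + 1) := by simp [sum_add_distrib]
      _ = μ := by rw [hμ]; exact sum_congr rfl fun j _ => Nat.sub_add_cancel (hm j)
  change F = ∏ j, linFactor a j ^ m j at hF
  rw [hF, pderiv_zero_prod_linFactor_pow a m hm, pderiv_one_prod_linFactor_pow a m hm,
    hilbertFnQuot_span_mul_pair (isHomogeneous_jacobianGcd a m) (jacobianGcd_ne_zero a m)
      (isHomogeneous_jacobianCofactor₀ a m) (isHomogeneous_jacobianCofactor₁ a m)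
      (jacobianCofactor₁_ne_zero a m (by omega)) (isRelPrime_jacobianCofactor ha hm (by omega)),
    Fintype.card_fin]
  omega
end

section
/- Let K be a field of characteristic zero, S = K[X_0,X_1], and F = Π_{i=1}^s (X_1 - a_i X_0)^{m_i} with distinct a_1,...,a_s ∈ K. Write G = Π_{i=1}^s (X_1 - a_i X_0)^{m_i - 1}, H_1 = Σ_i m_i a_i Π_{j≠i}(X_1 - a_j X_0), H_2 = Σ_i m_i Π_{j≠i}(X_1 - a_j X_0). Then gcd(H_1, H_2) = 1, so {H_1, H_2} is a regular sequence in S. -/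
/-!
Every common divisor of `H₁` and `H₂` divides `X₁ H₂ - X₀ H₁ = (∑ mᵢ) ∏ᵢ (X₁ - aᵢ X₀)`, and
`∑ mᵢ` is a unit. So it suffices that `H₂` is prime to each linear form `Lᵢ = X₁ - aᵢ X₀`:
modulo `Lᵢ` every summand of `H₂` but the `i`-th vanishes, and `mᵢ ∏_{j ≠ i} Lⱼ` is not
divisible by the prime `Lᵢ` because the `aⱼ` are distinct.
-/

open MvPolynomial Finset

theorem prime_X_one_sub_C_mul_X_zero {R : Type*} [CommRing R] [IsDomain R] (c : R) :
    Prime (X 1 - C c * X 0 : MvPolynomial (Fin 2) R) := by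
  let e : MvPolynomial (Fin 2) R ≃+* Polynomial (MvPolynomial (Fin 1) R) :=
    ((renameEquiv R (Equiv.swap (0 : Fin 2) 1)).trans (finSuccEquiv R 1)).toRingEquiv
  have he : e (X 1 - C c * X 0) = Polynomial.X - Polynomial.C (C c * X 0) := by
    simp only [e, map_sub, map_mul, AlgEquiv.coe_ringEquiv,
      AlgEquiv.trans_apply, renameEquiv_apply, rename_X, rename_C]
    rw [show Equiv.swap (0 : Fin 2) 1 1 = 0 from rfl, show Equiv.swap (0 : Fin 2) 1 0 = 1 from rfl,
      show (1 : Fin 2) = Fin.succ 0 from rfl, finSuccEquiv_X_zero, finSuccEquiv_X_succ]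
    simp [finSuccEquiv_apply]
  rw [← MulEquiv.prime_iff e.toMulEquiv]
  exact he ▸ Polynomial.prime_X_sub_C _

theorem eq_of_X_one_sub_C_mul_X_zero_dvd {R : Type*} [CommRing R] {b c : R}
    (h : (X 1 - C b * X 0 : MvPolynomial (Fin 2) R) ∣ X 1 - C c * X 0) : b = c := by
  simpa only [map_sub, map_mul, eval_X, eval_C, Matrix.cons_val_one, Matrix.cons_val_zero,
    mul_one, sub_self, zero_dvd_iff, sub_eq_zero] using map_dvd (eval ![1, b]) h

theorem Prime.not_dvd_sum_mul_prod_erase {R ι : Type*} [CommRing R] [Fintype ι] [DecidableEq ι]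
    {L c : ι → R} {i : ι} (hp : Prime (L i)) (hc : ¬ L i ∣ c i)
    (hL : ∀ j ≠ i, ¬ L i ∣ L j) :
    ¬ L i ∣ ∑ k, c k * ∏ j ∈ univ.erase k, L j := by
  have hrest : L i ∣ ∑ k ∈ univ.erase i, c k * ∏ j ∈ univ.erase k, L j :=
    dvd_sum fun k hk => (dvd_prod_of_mem _ (mem_erase.2 ⟨(ne_of_mem_erase hk).symm,
      mem_univ i⟩)).mul_left _
  rw [← add_sum_erase _ _ (mem_univ i), dvd_add_left hrest]
  exact hp.not_dvd_mul hc (hp.not_dvd_finsetProd fun j hj => hL j (ne_of_mem_erase hj))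

theorem mul_sum_prod_erase_sub_mul_sum_prod_erase {R ι : Type*} [CommRing R] [Fintype ι]
    [DecidableEq ι] (x y : R) (b c : ι → R) :
    x * ∑ k, c k * ∏ j ∈ univ.erase k, (x - b j * y)
      - y * ∑ k, c k * b k * ∏ j ∈ univ.erase k, (x - b j * y)
      = (∑ k, c k) * ∏ j, (x - b j * y) := by
  rw [mul_sum, mul_sum, ← sum_sub_distrib, sum_mul]
  refine sum_congr rfl fun k _ => ?_
  rw [← mul_prod_erase _ _ (mem_univ k)]
  ring

theorem IsRelPrime.of_mul_sub_mul {R : Type*} [CommRing R] {f g x y z : R}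
    (hgz : IsRelPrime g z) (h : x * g - y * f = z) : IsRelPrime f g :=
  fun _ hf hg => hgz hg (h ▸ dvd_sub (hg.mul_left x) (hf.mul_left y))

/-- Let `K` be a field of characteristic zero, `S = K[X_0, X_1]`, and
`F = ∏_{i=1}^s (X_1 - a_i X_0)^{m_i}` with distinct `a_1, …, a_s ∈ K` and
`m_i ≥ 1`.  With `H_1 = ∑_i m_i a_i ∏_{j≠i} (X_1 - a_j X_0)` and
`H_2 = ∑_i m_i ∏_{j≠i} (X_1 - a_j X_0)`, the polynomials `H_1` and `H_2`
share no common non-unit factor, i.e. `gcd(H_1, H_2) = 1`. -/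
theorem gcd_H1_H2_eq_one (K : Type) [Field K] [CharZero K] (s : ℕ) (hs : 1 ≤ s)
    (a : Fin s → K) (ha : Function.Injective a)
    (m : Fin s → ℕ) (hm : ∀ i, 1 ≤ m i)
    (H₁ H₂ : MvPolynomial (Fin 2) K)
    (hH₁ : H₁ = ∑ i : Fin s, (m i : MvPolynomial (Fin 2) K) * MvPolynomial.C (a i) *
      ∏ j ∈ Finset.univ.erase i,
        (MvPolynomial.X 1 - MvPolynomial.C (a j) * MvPolynomial.X 0))
    (hH₂ : H₂ = ∑ i : Fin s, (m i : MvPolynomial (Fin 2) K) *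
      ∏ j ∈ Finset.univ.erase i,
        (MvPolynomial.X 1 - MvPolynomial.C (a j) * MvPolynomial.X 0)) :
    IsRelPrime H₁ H₂ := by
  have hunit : ∀ n : ℕ, 0 < n → IsUnit (n : MvPolynomial (Fin 2) K) := fun n hn =>
    map_natCast (C : K →+* MvPolynomial (Fin 2) K) n ▸ (Nat.cast_ne_zero.2 hn.ne').isUnit.map C
  have hL : ∀ i, Prime (X 1 - C (a i) * X 0 : MvPolynomial (Fin 2) K) := fun i =>
    prime_X_one_sub_C_mul_X_zero (a i)
  have hH₂L : IsRelPrime H₂ (∏ j, (X 1 - C (a j) * X 0)) := by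
    refine IsRelPrime.prod_right fun i _ => IsRelPrime.symm ?_
    refine (hL i).irreducible.isRelPrime_iff_not_dvd.2 (hH₂ ▸ ?_)
    refine (hL i).not_dvd_sum_mul_prod_erase (L := fun j => X 1 - C (a j) * X 0)
      (fun h => (hL i).not_isUnit (isUnit_of_dvd_unit h (hunit _ (hm i))))
      fun j hji h => hji (ha (eq_of_X_one_sub_C_mul_X_zero_dvd h)).symm
  have hsum : IsUnit (∑ k, (m k : MvPolynomial (Fin 2) K)) := by
    rw [← Nat.cast_sum]
    exact hunit _ (sum_pos (fun i _ => hm i) ⟨⟨0, hs⟩, mem_univ _⟩)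
  refine IsRelPrime.of_mul_sub_mul (x := X 1) (y := X 0) ((isRelPrime_mul_unit_left_right hsum).2 hH₂L) ?_
  rw [hH₁, hH₂]
  exact mul_sum_prod_erase_sub_mul_sum_prod_erase _ _ (fun j => C (a j)) _
end

section
/- Let X ⊆ P^n be a 0-dimensional scheme and 1 ≤ m ≤ n+1. Then for all i ∈ ℤ, HF_{Ω^m_{R_X/K}}(i) ≤ binom(n+1,m)·HF_X(i-m); in particular HF_{Ω^m_{R_X/K}}(i) ≤ binom(n+1,m)·deg(X) for all i, so the Hilbert polynomial of Ω^m_{R_X/K} is a constant. -/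
/-!
In degree `j + m`, `Ω^m_{R_X/K}` is spanned over `K` by the products `a • dx_σ` with
`a ∈ (R_X)_j` and `σ : Fin m → Fin (n + 1)`. Sorting `σ` changes `dx_σ` only by a sign (and kills
it when `σ` repeats an index), so the `C(n+1, m)` increasing `σ` suffice: this is the first bound.

Since `x_0` is a non-zero-divisor, multiplication by `x_0` embeds `(R_X)_d` into `(R_X)_{d+1}`, so
`HF_X` is nondecreasing and hence bounded by its eventual value `δ`. Once `HF_X` is constant,
multiplication by `x_0` maps `(R_X)_j` onto `(R_X)_{j+1}`, hence maps the degree `j + m` part of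
`Ω^m` onto the degree `j + 1 + m` part; the Hilbert function of `Ω^m` is then eventually
nonincreasing, hence eventually constant.
-/

open MvPolynomial

set_option maxHeartbeats 1000000
set_option synthInstance.maxHeartbeats 400000

noncomputable instance extAlgModK (K R M : Type) [CommRing K] [CommRing R] [Algebra K R]
    [AddCommGroup M] [Module R M] : Module K (ExteriorAlgebra R M) :=
  Module.compHom _ (algebraMap K R)

/-- The degree-`i` homogeneous component of the coordinate ring `R_X = S/I`. -/
noncomputable def coordPiece (K : Type) [Field K] (n : ℕ)
    (I : Ideal (MvPolynomial (Fin (n + 1)) K)) (i : ℕ) :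
    Submodule K (MvPolynomial (Fin (n + 1)) K ⧸ I) :=
  Submodule.span K {g | ∃ f : MvPolynomial (Fin (n + 1)) K,
    f.IsHomogeneous i ∧ g = Ideal.Quotient.mk I f}

/-- The homogeneous component of (total) degree `i` of `Ω^m_{R_X/K}`, realized
inside the exterior algebra over `R_X` of `Ω^1_{R_X/K}`. -/
noncomputable def omegaPiece (K : Type) [Field K] (n : ℕ)
    (I : Ideal (MvPolynomial (Fin (n + 1)) K)) (m i : ℕ) :
    Submodule K (ExteriorAlgebra (MvPolynomial (Fin (n + 1)) K ⧸ I)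
      (Ω[(MvPolynomial (Fin (n + 1)) K ⧸ I)⁄K])) :=
  Submodule.span K {w | ∃ (j : ℕ) (f : MvPolynomial (Fin (n + 1)) K)
      (σ : Fin m → Fin (n + 1)),
    i = j + m ∧ f.IsHomogeneous j ∧
    w = Ideal.Quotient.mk I f •
      ExteriorAlgebra.ιMulti (MvPolynomial (Fin (n + 1)) K ⧸ I) m
        (fun t => KaehlerDifferential.D K (MvPolynomial (Fin (n + 1)) K ⧸ I)
          (Ideal.Quotient.mk I (MvPolynomial.X (σ t))))}

section Finrank

variable {K V M N : Type*} [Field K] [AddCommGroup V] [Module K V]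
  [AddCommGroup M] [Module K M] [AddCommGroup N] [Module K N]

theorem Submodule.finrank_iSup_le_sum {ι : Type*} [Fintype ι] (p : ι → Submodule K V)
    [∀ i, FiniteDimensional K (p i)] :
    Module.finrank K ↥(⨆ i, p i) ≤ ∑ i, Module.finrank K (p i) := by
  classical
  rw [Submodule.iSup_eq_range_dfinsupp_lsum]
  exact (LinearMap.finrank_range_le _).trans (Module.finrank_directSum K fun i => p i).le

theorem Submodule.map₂_span_range_eq_iSup {ι : Type*} (f : M →ₗ[K] N →ₗ[K] V)
    (p : Submodule K M) (w : ι → N) :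
    Submodule.map₂ f p (Submodule.span K (Set.range w)) = ⨆ i, p.map (f.flip (w i)) := by
  simp_rw [Submodule.span_range_eq_iSup, Submodule.map₂_iSup_right,
    Submodule.map₂_span_singleton_eq_map_flip]

theorem Submodule.finiteDimensional_map₂_span_range {ι : Type*} [Finite ι]
    (f : M →ₗ[K] N →ₗ[K] V) (p : Submodule K M) [FiniteDimensional K p] (w : ι → N) :
    FiniteDimensional K (Submodule.map₂ f p (Submodule.span K (Set.range w))) := by
  rw [Submodule.map₂_span_range_eq_iSup]
  infer_instance

theorem Submodule.finrank_map₂_span_range_le {ι : Type*} [Fintype ι] (f : M →ₗ[K] N →ₗ[K] V)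
    (p : Submodule K M) [FiniteDimensional K p] (w : ι → N) :
    Module.finrank K (Submodule.map₂ f p (Submodule.span K (Set.range w))) ≤
      Fintype.card ι * Module.finrank K p := by
  rw [Submodule.map₂_span_range_eq_iSup]
  calc _ ≤ ∑ i, Module.finrank K (p.map (f.flip (w i))) := Submodule.finrank_iSup_le_sum _
    _ ≤ ∑ _i : ι, Module.finrank K p :=
      Finset.sum_le_sum fun i _ => Submodule.finrank_map_le _ _
    _ = Fintype.card ι * Module.finrank K p := by
      rw [Finset.sum_const, Finset.card_univ, smul_eq_mul]

end Finrank

section ScalarMultiplication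

variable {K A E : Type*} [Field K] [CommRing A] [Algebra K A]
  [AddCommGroup E] [Module A E] [Module K E] [IsScalarTower K A E]

theorem Submodule.finrank_map_mulLeft {x : A} (hx : IsLeftRegular x) (p : Submodule K A) :
    Module.finrank K (p.map (LinearMap.mulLeft K x)) = Module.finrank K p :=
  (Submodule.equivMapOfInjective _ hx p).finrank_eq.symm

theorem Submodule.map₂_lsmul_map_mulLeft (x : A) (p : Submodule K A) (q : Submodule K E) :
    Submodule.map₂ ((LinearMap.lsmul A E).restrictScalars₁₂ K K)
        (p.map (LinearMap.mulLeft K x)) q =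
      (Submodule.map₂ ((LinearMap.lsmul A E).restrictScalars₁₂ K K) p q).map
        (((LinearMap.lsmul A E).restrictScalars₁₂ K K) x) := by
  rw [Submodule.map₂_map_left, Submodule.map_map₂]
  congr 1
  ext a e
  exact mul_smul x a e

end ScalarMultiplication

theorem ExteriorAlgebra.ιMulti_comp_mem_span_ιMulti_family {R M I : Type*} [CommRing R]
    [AddCommGroup M] [Module R M] [LinearOrder I] {m : ℕ} (v : I → M) (α : Fin m → I) :
    ExteriorAlgebra.ιMulti R m (v ∘ α) ∈
      Submodule.span ℤ (Set.range (ExteriorAlgebra.ιMulti_family R m v)) := by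
  by_cases hα : Function.Injective α
  swap
  · rw [AlternatingMap.map_eq_zero_of_not_injective _ _ fun h => hα h.of_comp]
    exact zero_mem _
  have hcard : (Finset.univ.image α).card = m := by
    rw [Finset.card_image_of_injective _ hα, Finset.card_fin]
  -- `σ` sorts `α`: `α ∘ σ` is the increasing enumeration of the image of `α`.
  let σ : Equiv.Perm (Fin m) := (Finset.orderIsoOfFin _ hcard).toEquiv.trans
    ((Equiv.setCongr Fintype.coe_image_univ).trans (Equiv.ofInjective α hα).symm)
  have hsorted : ExteriorAlgebra.ιMulti R m ((v ∘ α) ∘ σ) =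
      ExteriorAlgebra.ιMulti_family R m v (Set.powersetCard.ofCard hcard) := by
    rw [ExteriorAlgebra.ιMulti_family, Function.comp_assoc]
    congr 1
    ext i
    simp only [Function.comp_apply, Equiv.coe_trans, RelIso.coe_fn_toEquiv,
      Equiv.apply_ofInjective_symm, σ]
    rfl
  rw [AlternatingMap.map_perm] at hsorted
  have hsign : ExteriorAlgebra.ιMulti R m (v ∘ α) = (Equiv.Perm.sign σ : ℤ) •
      ExteriorAlgebra.ιMulti_family R m v (Set.powersetCard.ofCard hcard) := by
    rw [← hsorted, ← Units.smul_def, smul_smul, Int.units_mul_self, one_smul]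
  rw [hsign]
  exact Submodule.smul_mem _ _ (Submodule.subset_span ⟨_, rfl⟩)

-- Mathlib's scalar tower instance on `CliffordAlgebra` concerns its own `K`-module structure,
-- not `extAlgModK`.
instance isScalarTower_extAlgModK (K R M : Type) [CommRing K] [CommRing R] [Algebra K R]
    [AddCommGroup M] [Module R M] : IsScalarTower K R (ExteriorAlgebra R M) :=
  IsScalarTower.of_algebraMap_smul fun _ _ => rfl

section CoordinateRing

variable (K : Type) [Field K] (n : ℕ) (I : Ideal (MvPolynomial (Fin (n + 1)) K))

local notation "R" => MvPolynomial (Fin (n + 1)) K ⧸ I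
local notation "E" => ExteriorAlgebra R (Ω[R⁄K])

theorem coordPiece_eq_map (i : ℕ) :
    coordPiece K n I i =
      (homogeneousSubmodule (Fin (n + 1)) K i).map (Ideal.Quotient.mkₐ K I).toLinearMap := by
  rw [coordPiece, ← Submodule.span_eq (homogeneousSubmodule (Fin (n + 1)) K i),
    Submodule.map_span]
  congr 1
  ext g
  simp [eq_comm]

instance (i : ℕ) : FiniteDimensional K (coordPiece K n I i) := by
  rw [coordPiece_eq_map]
  exact Module.Finite.iff_fg.mpr ((homogeneousSubmodule_fg (Fin (n + 1)) K i).map _)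

theorem map_mulLeft_coordPiece_le {g : MvPolynomial (Fin (n + 1)) K} {e : ℕ}
    (hg : g.IsHomogeneous e) (d : ℕ) :
    (coordPiece K n I d).map (LinearMap.mulLeft K (Ideal.Quotient.mk I g)) ≤
      coordPiece K n I (d + e) := by
  rw [coordPiece, coordPiece, Submodule.map_span]
  refine Submodule.span_mono ?_
  rintro _ ⟨_, ⟨f, hf, rfl⟩, rfl⟩
  exact ⟨f * g, hf.mul hg, by simp [mul_comm]⟩

local notation "dX" => fun k : Fin (n + 1) =>
  KaehlerDifferential.D K R (Ideal.Quotient.mk I (X k))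
local notation "smulₗ" => LinearMap.restrictScalars₁₂ K K (LinearMap.lsmul R E)

theorem omegaPiece_add_eq_map₂ (m j : ℕ) :
    omegaPiece K n I m (j + m) = Submodule.map₂ smulₗ (coordPiece K n I j)
      (Submodule.span K (Set.range fun σ : Fin m → Fin (n + 1) =>
        ExteriorAlgebra.ιMulti R m (dX ∘ σ))) := by
  rw [omegaPiece, coordPiece, Submodule.map₂_span_span]
  congr 1
  ext w
  constructor
  · rintro ⟨j', f, σ, hj, hf, rfl⟩
    obtain rfl : j' = j := by omega
    exact ⟨_, ⟨f, hf, rfl⟩, _, ⟨σ, rfl⟩, rfl⟩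
  · rintro ⟨_, ⟨f, hf, rfl⟩, _, ⟨σ, rfl⟩, rfl⟩
    exact ⟨j, f, σ, rfl, hf, rfl⟩

theorem omegaPiece_eq_bot_of_lt {m i : ℕ} (h : i < m) : omegaPiece K n I m i = ⊥ := by
  rw [omegaPiece, Submodule.span_eq_bot]
  rintro _ ⟨j, f, σ, rfl, -, -⟩
  omega

theorem omegaPiece_add_le_map₂_ιMulti_family (m j : ℕ) :
    omegaPiece K n I m (j + m) ≤ Submodule.map₂ smulₗ (coordPiece K n I j)
      (Submodule.span K (Set.range (ExteriorAlgebra.ιMulti_family R m dX))) := by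
  rw [omegaPiece_add_eq_map₂]
  refine Submodule.map₂_le_map₂_right (Submodule.span_le.mpr ?_)
  rintro _ ⟨σ, rfl⟩
  exact Submodule.span_le_restrictScalars ℤ K _
    (ExteriorAlgebra.ιMulti_comp_mem_span_ιMulti_family dX σ)

theorem finiteDimensional_omegaPiece_add (m j : ℕ) :
    FiniteDimensional K (omegaPiece K n I m (j + m)) :=
  have := Submodule.finiteDimensional_map₂_span_range smulₗ (coordPiece K n I j)
    (ExteriorAlgebra.ιMulti_family R m dX)
  Submodule.finiteDimensional_of_le (omegaPiece_add_le_map₂_ιMulti_family K n I m j)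

theorem finrank_omegaPiece_add_le (m j : ℕ) :
    Module.finrank K (omegaPiece K n I m (j + m)) ≤
      (n + 1).choose m * Module.finrank K (coordPiece K n I j) := by
  have := Submodule.finiteDimensional_map₂_span_range smulₗ (coordPiece K n I j)
    (ExteriorAlgebra.ιMulti_family R m dX)
  have hcard : Fintype.card (Set.powersetCard (Fin (n + 1)) m) = (n + 1).choose m := by
    rw [← Nat.card_eq_fintype_card, Set.powersetCard.card, Nat.card_eq_fintype_card,
      Fintype.card_fin]
  calc _ ≤ _ := Submodule.finrank_mono (omegaPiece_add_le_map₂_ιMulti_family K n I m j)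
    _ ≤ _ := Submodule.finrank_map₂_span_range_le _ _ _
    _ = _ := by rw [hcard]

theorem finrank_coordPiece_le_add {g : MvPolynomial (Fin (n + 1)) K} {e : ℕ}
    (hg : g.IsHomogeneous e) (hreg : IsLeftRegular (Ideal.Quotient.mk I g)) (d : ℕ) :
    Module.finrank K (coordPiece K n I d) ≤ Module.finrank K (coordPiece K n I (d + e)) := by
  rw [← Submodule.finrank_map_mulLeft hreg]
  exact Submodule.finrank_mono (map_mulLeft_coordPiece_le K n I hg d)

theorem map_mulLeft_coordPiece_eq_of_finrank_eq {g : MvPolynomial (Fin (n + 1)) K} {e : ℕ}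
    (hg : g.IsHomogeneous e) (hreg : IsLeftRegular (Ideal.Quotient.mk I g)) {d : ℕ}
    (h : Module.finrank K (coordPiece K n I d) = Module.finrank K (coordPiece K n I (d + e))) :
    (coordPiece K n I d).map (LinearMap.mulLeft K (Ideal.Quotient.mk I g)) =
      coordPiece K n I (d + e) :=
  Submodule.eq_of_le_of_finrank_eq (map_mulLeft_coordPiece_le K n I hg d)
    (by rw [Submodule.finrank_map_mulLeft hreg, h])

theorem finrank_omegaPiece_succ_add_le {m j : ℕ} {x : R}
    (h : (coordPiece K n I j).map (LinearMap.mulLeft K x) = coordPiece K n I (j + 1)) :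
    Module.finrank K (omegaPiece K n I m (j + 1 + m)) ≤
      Module.finrank K (omegaPiece K n I m (j + m)) := by
  have := finiteDimensional_omegaPiece_add K n I m j
  rw [omegaPiece_add_eq_map₂, ← h, Submodule.map₂_lsmul_map_mulLeft, ← omegaPiece_add_eq_map₂]
  exact Submodule.finrank_map_le _ _

end CoordinateRing

theorem hilbert_function_omega_bounded_general (K : Type) [Field K] (n : ℕ)
    (I : Ideal (MvPolynomial (Fin (n + 1)) K))
    (hx0 : ∀ r : MvPolynomial (Fin (n + 1)) K ⧸ I,
      Ideal.Quotient.mk I (MvPolynomial.X 0) * r = 0 → r = 0)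
    (δ r : ℕ) (hδ : ∀ i : ℕ, r ≤ i → Module.finrank K (coordPiece K n I i) = δ)
    (m : ℕ) :
    (∀ i : ℕ, m ≤ i →
      Module.finrank K (omegaPiece K n I m i) ≤
        Nat.choose (n + 1) m * Module.finrank K (coordPiece K n I (i - m))) ∧
    (∀ i : ℕ, Module.finrank K (omegaPiece K n I m i) ≤ Nat.choose (n + 1) m * δ) ∧
    (∃ (c N : ℕ), ∀ i : ℕ, N ≤ i →
      Module.finrank K (omegaPiece K n I m i) = c) := by
  have hreg := isLeftRegular_iff_right_eq_zero_of_mul.mpr hx0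
  have hX0 := isHomogeneous_X K (0 : Fin (n + 1))
  have hHF_le : ∀ d, Module.finrank K (coordPiece K n I d) ≤ δ := fun d =>
    (monotone_nat_of_le_succ (finrank_coordPiece_le_add K n I hX0 hreg)
      (d.le_add_right r)).trans (hδ _ (by omega)).le
  have hΩ_le : ∀ i, m ≤ i → Module.finrank K (omegaPiece K n I m i) ≤
      (n + 1).choose m * Module.finrank K (coordPiece K n I (i - m)) := by
    intro i hi
    obtain ⟨j, rfl⟩ := Nat.exists_eq_add_of_le' hi
    rw [Nat.add_sub_cancel]
    exact finrank_omegaPiece_add_le K n I m j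
  refine ⟨hΩ_le, fun i => ?_, ?_⟩
  · rcases lt_or_ge i m with h | h
    · rw [omegaPiece_eq_bot_of_lt K n I h, finrank_bot]
      exact Nat.zero_le _
    · exact (hΩ_le i h).trans (Nat.mul_le_mul_left _ (hHF_le _))
  · have hanti : Antitone fun k => Module.finrank K (omegaPiece K n I m (r + k + m)) :=
      antitone_nat_of_succ_le fun k => finrank_omegaPiece_succ_add_le K n I (j := r + k)
        (map_mulLeft_coordPiece_eq_of_finrank_eq K n I hX0 hreg
          (by rw [hδ _ (by omega), hδ _ (by omega)]))
    obtain ⟨N, hN⟩ := WellFoundedLT.antitone_chain_condition hanti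
    refine ⟨Module.finrank K (omegaPiece K n I m (r + N + m)), r + N + m, fun i hi => ?_⟩
    obtain ⟨k, rfl⟩ : ∃ k, i = r + k + m := ⟨i - m - r, by omega⟩
    exact (hN k (by omega)).symm

/-- Let `X ⊆ ℙⁿ` be a 0-dimensional scheme (no point on `Z⁺(X_0)`, with degree
`δ = deg X`, i.e. `HF_X(i) = δ` for `i ≥ r`) and let `1 ≤ m ≤ n+1`.  Then
`HF_{Ω^m_{R_X/K}}(i) ≤ C(n+1,m)·HF_X(i-m)` for all `i ≥ m`; in particular
`HF_{Ω^m_{R_X/K}}(i) ≤ C(n+1,m)·deg X` for all `i`, and the Hilbert polynomial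
of `Ω^m_{R_X/K}` is a constant. -/
theorem hilbert_function_omega_bounded (K : Type) [Field K] [CharZero K] (n : ℕ)
    (I : Ideal (MvPolynomial (Fin (n + 1)) K))
    (hI : ∀ f ∈ I, ∀ d : ℕ, MvPolynomial.homogeneousComponent d f ∈ I)
    (hx0 : ∀ r : MvPolynomial (Fin (n + 1)) K ⧸ I,
      Ideal.Quotient.mk I (MvPolynomial.X 0) * r = 0 → r = 0)
    (δ r : ℕ) (hδ : ∀ i : ℕ, r ≤ i → Module.finrank K (coordPiece K n I i) = δ)
    (m : ℕ) (hm : 1 ≤ m) (hmn : m ≤ n + 1) :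
    (∀ i : ℕ, m ≤ i →
      Module.finrank K (omegaPiece K n I m i) ≤
        Nat.choose (n + 1) m * Module.finrank K (coordPiece K n I (i - m))) ∧
    (∀ i : ℕ, Module.finrank K (omegaPiece K n I m i) ≤ Nat.choose (n + 1) m * δ) ∧
    (∃ (c N : ℕ), ∀ i : ℕ, N ≤ i →
      Module.finrank K (omegaPiece K n I m i) = c) :=
  hilbert_function_omega_bounded_general K n I hx0 δ r hδ m
end
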